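/- arXiv:0808.2692 — 2 statements merged into one kernel-verified Lean document; each statement's English description precedes it below -/
import Mathlib

section
/- ∫₀^1 x^{-ln x}/(1+x²) dx = ∫₀^∞ e^{-4x²/π}/cosh(2√π x) dx. -/
/-!
Write `exp (-(log y)^2) = (2/π) ∫ exp (-4x²/π) cos (4x log y / √π) dx` and swap the integrals.
The inner integral `∫₀¹ cos (b log y) / (1 + y²) dy` is, by `y ↦ 1/y`, half the integral over
`(0, ∞)`, i.e. the real part of the Mellin transform of `1 / (1 + y²)` at `1 + b i`. The
substitution `v = y² / (1 + y²)` turns that Mellin transform at `s` into `B(s/2, 1 - s/2) / 2`,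
which the reflection formula evaluates to `π / (2 sin (πs/2))`; at `s = 1 + b i` this is
`π / (2 cosh (πb/2))`. With `b = 4x/√π` the remaining integrand is
`exp (-4x²/π) / cosh (2√π x)` up to constants, and it is even in `x`.
-/

open Real MeasureTheory Set Filter Asymptotics

lemma Complex.ofReal_cpow_eq_exp_log {p : ℝ} (hp : 0 < p) (z : ℂ) :
    (p : ℂ) ^ z = Complex.exp (Real.log p * z) := by
  rw [Complex.cpow_def_of_ne_zero (by exact_mod_cast hp.ne'), ← Complex.ofReal_log hp.le]

lemma image_sq_div_one_add_sq_Ioi : (fun t : ℝ => t^2 / (1 + t^2)) '' Ioi 0 = Ioo 0 1 := by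
  ext v
  constructor
  · rintro ⟨t, ht, rfl⟩
    have ha : (0:ℝ) < 1 + t^2 := by positivity
    exact ⟨div_pos (pow_pos ht 2) ha, (div_lt_one ha).2 (by linarith)⟩
  · rintro ⟨hv0, hv1⟩
    have h1v : 0 < 1 - v := by linarith
    refine ⟨√(v / (1 - v)), Real.sqrt_pos.2 (div_pos hv0 h1v), ?_⟩
    beta_reduce
    rw [Real.sq_sqrt (div_pos hv0 h1v).le]
    field_simp
    ring

lemma strictMonoOn_sq_div_one_add_sq : StrictMonoOn (fun t : ℝ => t^2 / (1 + t^2)) (Ici 0) := by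
  intro a ha b _ hab
  rw [div_lt_div_iff₀ (by positivity) (by positivity)]
  nlinarith [mul_self_lt_mul_self (mem_Ici.1 ha) hab]

lemma hasDerivAt_sq_div_one_add_sq (t : ℝ) :
    HasDerivAt (fun t : ℝ => t^2 / (1 + t^2)) (2 * t * ((1 + t^2)^2)⁻¹) t := by
  have ha : 1 + t^2 ≠ 0 := by positivity
  have hsq : HasDerivAt (fun t : ℝ => t^2) (2 * t) t := by simpa using hasDerivAt_pow 2 t
  refine (hsq.div (hsq.const_add 1) ha).congr_deriv ?_
  field_simp
  ring

theorem Complex.betaIntegral_eq_two_mul_integral_Ioi (u v : ℂ) :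
    betaIntegral u v = 2 * ∫ t in Ioi (0:ℝ), (t : ℂ)^(2*u-1) / (1 + (t : ℂ)^2)^(u+v) := by
  have hsubst := integral_image_eq_integral_abs_deriv_smul measurableSet_Ioi
    (fun t _ => (hasDerivAt_sq_div_one_add_sq t).hasDerivWithinAt)
    (strictMonoOn_sq_div_one_add_sq.injOn.mono Ioi_subset_Ici_self)
    (fun x : ℝ => (x : ℂ)^(u-1) * (1 - (x : ℂ))^(v-1))
  rw [betaIntegral, intervalIntegral.integral_of_le zero_le_one, integral_Ioc_eq_integral_Ioo,
    ← image_sq_div_one_add_sq_Ioi, hsubst, ← integral_const_mul]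
  refine setIntegral_congr_fun measurableSet_Ioi fun t ht => ?_
  have ht : 0 < t := ht
  have ha : (0:ℝ) < 1 + t^2 := by positivity
  have hcoef : 2 * t * ((1 + t^2)^2)⁻¹ = 2 * Real.exp (Real.log t - 2 * Real.log (1 + t^2)) := by
    rw [Real.exp_sub, Real.exp_log ht, ← Real.exp_log (pow_pos ha 2), Real.log_pow]
    push_cast
    ring
  have hcompl : 1 - ((t^2 / (1 + t^2) : ℝ) : ℂ) = (((1 + t^2)⁻¹ : ℝ) : ℂ) := by
    rw [← Complex.ofReal_one, ← Complex.ofReal_sub]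
    congr 1
    field_simp
    ring
  have hsq : 1 + (t : ℂ)^2 = ((1 + t^2 : ℝ) : ℂ) := by push_cast; ring
  -- every factor is now a complex power of a positive real; compare exponents
  rw [abs_of_pos (by positivity), Complex.real_smul, hcompl, hsq, hcoef,
    Complex.ofReal_cpow_eq_exp_log (by positivity), Complex.ofReal_cpow_eq_exp_log (by positivity),
    Complex.ofReal_cpow_eq_exp_log ht, Complex.ofReal_cpow_eq_exp_log ha,
    Real.log_div (by positivity) ha.ne', Real.log_inv, Real.log_pow, div_eq_mul_inv,
    ← Complex.exp_neg]
  push_cast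
  rw [mul_assoc, ← Complex.exp_add, ← Complex.exp_add, ← Complex.exp_add]
  ring_nf

theorem Complex.betaIntegral_one_sub {s : ℂ} (hs0 : 0 < s.re) (hs1 : s.re < 1) :
    betaIntegral s (1 - s) = π / sin (π * s) := by
  rw [betaIntegral_eq_Gamma_mul_div s (1 - s) hs0 (by simpa using hs1), add_sub_cancel,
    Gamma_one, div_one, Gamma_mul_Gamma_one_sub]

lemma mellinConvergent_inv_one_add_sq {s : ℂ} (hs0 : 0 < s.re) (hs2 : s.re < 2) :
    MellinConvergent (fun t : ℝ => (1 + (t : ℂ)^2)⁻¹) s := by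
  have hnorm (t : ℝ) : ‖(1 + (t : ℂ)^2)⁻¹‖ = (1 + t^2)⁻¹ := by
    rw [norm_inv, ← Complex.ofReal_one, ← Complex.ofReal_pow, ← Complex.ofReal_add,
      Complex.norm_real, Real.norm_of_nonneg (by positivity)]
  refine mellinConvergent_of_isBigO_rpow (a := 2) (b := 0) ?_ ?_ hs2 ?_ hs0
  · have hne (t : ℝ) : 1 + (t : ℂ)^2 ≠ 0 := by exact_mod_cast (by positivity : 1 + t^2 ≠ 0)
    exact (Continuous.inv₀ (by fun_prop) hne).continuousOn.locallyIntegrableOn measurableSet_Ioi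
  · refine IsBigO.of_bound 1 (eventually_gt_atTop 0 |>.mono fun t ht => ?_)
    rw [hnorm, Real.norm_of_nonneg (by positivity), one_mul, Real.rpow_neg ht.le,
      Real.rpow_two]
    exact inv_anti₀ (by positivity) (by linarith)
  · refine IsBigO.of_bound 1 (Eventually.of_forall fun t => ?_)
    rw [hnorm, neg_zero, Real.rpow_zero, norm_one, one_mul]
    exact inv_le_one_of_one_le₀ (by nlinarith)

theorem mellin_inv_one_add_sq {s : ℂ} (hs0 : 0 < s.re) (hs2 : s.re < 2) :
    mellin (fun t : ℝ => (1 + (t : ℂ)^2)⁻¹) s = π / (2 * Complex.sin (π * s / 2)) := by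
  have hbeta := Complex.betaIntegral_eq_two_mul_integral_Ioi (s / 2) (1 - s / 2)
  rw [Complex.betaIntegral_one_sub (by simpa using hs0)
    (by rw [Complex.div_ofNat_re]; linarith), add_sub_cancel] at hbeta
  simp only [Complex.cpow_one, mul_div_cancel₀ s two_ne_zero] at hbeta
  simp only [mellin, smul_eq_mul, ← div_eq_mul_inv]
  rw [mul_comm 2, ← div_div, mul_div_assoc, hbeta]
  ring

theorem integral_Ioi_cos_mul_log_div_one_add_sq (b : ℝ) :
    ∫ x in Ioi (0:ℝ), cos (b * log x) / (1 + x^2) = π / (2 * cosh (π * b / 2)) := by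
  set s : ℂ := 1 + b * Complex.I with hs_def
  have hs : s.re = 1 := by simp [hs_def]
  have hre := integral_re (mellinConvergent_inv_one_add_sq (s := s) (by rw [hs]; norm_num)
    (by rw [hs]; norm_num))
  have hsin : Complex.sin (π * s / 2) = cosh (π * b / 2) := by
    rw [show (π : ℂ) * s / 2 = (π * b / 2 : ℝ) * Complex.I + π / 2 by rw [hs_def]; push_cast; ring,
      Complex.sin_add_pi_div_two, Complex.cos_mul_I, Complex.ofReal_cosh]
  rw [← mellin, mellin_inv_one_add_sq (by rw [hs]; norm_num) (by rw [hs]; norm_num), hsin,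
    ← Complex.ofReal_ofNat, ← Complex.ofReal_mul, ← Complex.ofReal_div] at hre
  simp only [RCLike.re_to_complex, Complex.ofReal_re] at hre
  rw [← hre]
  refine setIntegral_congr_fun measurableSet_Ioi fun x hx => ?_
  rw [hs_def, add_sub_cancel_left, Complex.ofReal_cpow_eq_exp_log hx,
    show (Real.log x : ℂ) * (b * Complex.I) = (b * Real.log x : ℝ) * Complex.I by push_cast; ring,
    ← Complex.ofReal_one, ← Complex.ofReal_pow, ← Complex.ofReal_add, ← Complex.ofReal_inv,
    smul_eq_mul, Complex.re_mul_ofReal, Complex.exp_ofReal_mul_I_re, div_eq_mul_inv]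

theorem integral_Ioi_eq_two_nsmul_integral_Ioo_of_inv {E : Type*} [NormedAddCommGroup E]
    [NormedSpace ℝ E] {f : ℝ → E} (hf : IntegrableOn f (Ioi 0))
    (hinv : ∀ x ∈ Ioo (0:ℝ) 1, (x^2)⁻¹ • f x⁻¹ = f x) :
    ∫ x in Ioi 0, f x = 2 • ∫ x in Ioo 0 1, f x := by
  have himage : Inv.inv '' Ioo (0:ℝ) 1 = Ioi 1 := by
    rw [image_inv_eq_inv, inv_Ioo_0_left one_pos, inv_one]
  have hIoi : ∫ x in Ioi 1, f x = ∫ x in Ioo 0 1, f x := by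
    rw [← himage, integral_image_eq_integral_abs_deriv_smul measurableSet_Ioo
      (fun x hx => (hasDerivAt_inv hx.1.ne').hasDerivWithinAt) inv_injective.injOn]
    refine setIntegral_congr_fun measurableSet_Ioo fun x hx => ?_
    rw [abs_neg, abs_of_pos (inv_pos.2 (pow_pos hx.1 2)), hinv x hx]
  rw [← Ioc_union_Ioi_eq_Ioi zero_le_one, setIntegral_union Ioc_disjoint_Ioi_same measurableSet_Ioi
    (hf.mono_set Ioc_subset_Ioi_self) (hf.mono_set (Ioi_subset_Ioi zero_le_one)),
    integral_Ioc_eq_integral_Ioo, hIoi, two_nsmul]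

theorem integral_Ioo_cos_mul_log_div_one_add_sq (b : ℝ) :
    ∫ x in Ioo (0:ℝ) 1, cos (b * log x) / (1 + x^2) = π / (4 * cosh (π * b / 2)) := by
  have hint : IntegrableOn (fun x => cos (b * log x) / (1 + x^2)) (Ioi 0) := by
    refine (integrable_inv_one_add_sq.mono' (Measurable.aestronglyMeasurable (by fun_prop))
      (Eventually.of_forall fun x => ?_)).integrableOn
    rw [norm_div, Real.norm_of_nonneg (by positivity : (0:ℝ) ≤ 1 + x^2), div_eq_mul_inv]
    exact mul_le_of_le_one_left (by positivity) (abs_cos_le_one _)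
  have h := integral_Ioi_eq_two_nsmul_integral_Ioo_of_inv hint fun x hx => by
    have hx : x ≠ 0 := hx.1.ne'
    rw [smul_eq_mul, log_inv, mul_neg, cos_neg]
    field_simp
    ring
  rw [integral_Ioi_cos_mul_log_div_one_add_sq, two_nsmul] at h
  rw [show π / (4 * cosh (π * b / 2)) = π / (2 * cosh (π * b / 2)) / 2 by ring, h]
  ring

theorem integral_exp_neg_mul_sq_mul_cos {β : ℝ} (hβ : 0 < β) (ω : ℝ) :
    ∫ x, exp (-β * x^2) * cos (ω * x) = √(π / β) * exp (-ω^2 / (4 * β)) := by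
  have h := fourierIntegral_gaussian (b := (β : ℂ)) (by simpa using hβ) ω
  have hint : Integrable fun x : ℝ => Complex.exp (Complex.I * ω * x) * Complex.exp (-β * x^2) := by
    refine (integrable_cexp_quadratic (b := (β : ℂ)) (by simpa using hβ) (Complex.I * ω) 0).congr
      (Eventually.of_forall fun x => ?_)
    simp only [← Complex.exp_add]
    ring_nf
  have hval : ((π : ℂ) / β)^(1/2 : ℂ) * Complex.exp (-ω^2 / (4 * β))
      = ((√(π / β) * exp (-ω^2 / (4 * β)) : ℝ) : ℂ) := by
    rw [sqrt_eq_rpow, Complex.ofReal_mul, Complex.ofReal_cpow (div_pos pi_pos hβ).le]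
    push_cast
    rfl
  have hre := integral_re hint
  rw [h, hval] at hre
  simp only [RCLike.re_to_complex, Complex.ofReal_re] at hre
  rw [← hre]
  congr 1 with x
  rw [show Complex.I * ω * x = ((ω * x : ℝ) : ℂ) * Complex.I by push_cast; ring,
    show -(β : ℂ) * x^2 = ((-β * x^2 : ℝ) : ℂ) by push_cast; ring, ← Complex.ofReal_exp,
    Complex.re_mul_ofReal, Complex.exp_ofReal_mul_I_re, mul_comm]

-- the width `4/π` is chosen so that no rescaling is needed at the end
lemma exp_neg_sq_eq_integral (c : ℝ) :
    exp (-c^2) = 2 / π * ∫ x, exp (-(4 / π) * x^2) * cos (4 / √π * c * x) := by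
  rw [integral_exp_neg_mul_sq_mul_cos (by positivity),
    show π / (4 / π) = (π / 2)^2 by rw [div_div_eq_mul_div]; ring, sqrt_sq (by positivity),
    mul_pow, div_pow, sq_sqrt pi_pos.le]
  field_simp

lemma integrable_gaussian_mul_cos_div_one_add_sq (s : Set ℝ) {β : ℝ} (hβ : 0 < β) (a : ℝ) :
    Integrable (fun p : ℝ × ℝ => exp (-β * p.2^2) * (cos (a * p.2 * log p.1) / (1 + p.1^2)))
      ((volume.restrict s).prod volume) := by
  have hprod := (integrable_inv_one_add_sq.restrict (s := s)).mul_prod (integrable_exp_neg_mul_sq hβ)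
  have hcos : Measurable fun p : ℝ × ℝ => cos (a * p.2 * log p.1) := by fun_prop
  refine (hprod.mul_bdd (c := 1) hcos.aestronglyMeasurable (Eventually.of_forall fun p => ?_)).congr
    (Eventually.of_forall fun p => ?_)
  · exact abs_cos_le_one _
  · simp only
    ring

theorem russell_integral_5 :
    ∫ x in Set.Ioo (0:ℝ) 1, Real.exp (-(Real.log x)^2) / (1 + x^2) =
    ∫ x in Set.Ioi (0:ℝ), Real.exp (-4 * x^2 / π) / Real.cosh (2 * Real.sqrt π * x) := by
  set K : ℝ → ℝ → ℝ := fun y x => exp (-(4 / π) * x^2) * (cos (4 / √π * x * log y) / (1 + y^2))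
  have hswap := integral_integral_swap (f := K)
    (integrable_gaussian_mul_cos_div_one_add_sq (Ioo 0 1) (by positivity) (4 / √π))
  have hinner (y : ℝ) : exp (-(log y)^2) / (1 + y^2) = 2 / π * ∫ x, K y x := by
    rw [exp_neg_sq_eq_integral (log y), mul_div_assoc, ← integral_div]
    congr 2 with x
    rw [mul_right_comm (4 / √π), mul_div_assoc]
  have houter (x : ℝ) :
      ∫ y in Ioo 0 1, K y x = π / 4 * (exp (-4 * x^2 / π) / cosh (2 * √π * x)) := by
    have harg : π * (4 / √π * x) / 2 = 2 * √π * x := by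
      field_simp
      linear_combination -4 * x * sq_sqrt pi_pos.le
    rw [integral_const_mul, integral_Ioo_cos_mul_log_div_one_add_sq, harg]
    ring_nf
  have heven : ∫ x, exp (-4 * x^2 / π) / cosh (2 * √π * x)
      = 2 * ∫ x in Ioi 0, exp (-4 * x^2 / π) / cosh (2 * √π * x) := by
    rw [← integral_comp_abs (f := fun x => exp (-4 * x^2 / π) / cosh (2 * √π * x))]
    congr 1 with x
    rw [sq_abs, ← cosh_abs, abs_mul, abs_of_pos (by positivity : 0 < 2 * √π)]
  rw [setIntegral_congr_fun measurableSet_Ioo fun y _ => hinner y, integral_const_mul, hswap,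
    integral_congr_ae (Eventually.of_forall houter), integral_const_mul, heven, ← mul_assoc,
    ← mul_assoc, show 2 / π * (π / 4) * 2 = 1 by field_simp; norm_num, one_mul]
end

section
/- ∫₀^∞ ( e^{-x²/π²} + π^{5/2} e^{-x²} ) x²/cosh(x) dx = (π²/2) ∫₀^∞ e^{-x²/π²}/cosh(x) dx. -/
open Real MeasureTheory Set FourierTransform
open scoped Complex

/-!
Substituting `x = π u`, the identity becomes
`∫₀^∞ (e^{-u²} + π^{5/2} e^{-π²u²}) u² / cosh(πu) du = ½ ∫₀^∞ e^{-u²} / cosh(πu) du`,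
and as all integrands are even it suffices to prove it on the whole line. There it is the
multiplication formula `∫ 𝓕f · g = ∫ f · 𝓕g` for `g(x) = 1 / cosh(πx)`, which is its own Fourier
transform, and `f(x) = x² e^{-π²x²}`, whose Fourier transform `π^{-5/2} (½ - ξ²) e^{-ξ²}` is the
second derivative of the Fourier transform of the Gaussian, up to the factor `-4π²`.
The self-duality of `1 / cosh(πx)` comes from the substitution `t = sigmoid y`, which turns
`∫ e^{cy} / (1 + e^y) dy` into the Beta integral `B(c, 1 - c) = Γ(c) Γ(1 - c) = π / sin(πc)`.
-/

lemma log_one_sub_sigmoid (y : ℝ) : log (1 - sigmoid y) = log (sigmoid y) - y := by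
  rw [← sigmoid_neg, ← sigmoid_mul_rexp_neg, log_mul (sigmoid_pos y).ne' (exp_pos _).ne', log_exp]
  ring

lemma abs_deriv_sigmoid_smul_cpow_mul_cpow (c : ℂ) (y : ℝ) :
    |sigmoid y * (1 - sigmoid y)| •
        ((sigmoid y : ℂ) ^ (c - 1) * (1 - (sigmoid y : ℂ)) ^ (1 - c - 1))
      = cexp (c * y) / (1 + rexp y) := by
  have hσ := sigmoid_pos y
  have h1σ : 0 < 1 - sigmoid y := sub_pos.2 (sigmoid_lt_one y)
  have hpow : (sigmoid y : ℂ) ^ (c - 1) * (1 - (sigmoid y : ℂ)) ^ (1 - c - 1)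
      = cexp (c * y) / sigmoid y := by
    rw [← Complex.ofReal_one, ← Complex.ofReal_sub,
      Complex.cpow_def_of_ne_zero (by exact_mod_cast hσ.ne'),
      Complex.cpow_def_of_ne_zero (by exact_mod_cast h1σ.ne'), ← Complex.exp_add,
      ← Complex.ofReal_log hσ.le, ← Complex.ofReal_log h1σ.le, log_one_sub_sigmoid,
      eq_div_iff (by exact_mod_cast hσ.ne')]
    nth_rw 3 [← exp_log hσ]
    push_cast
    rw [← Complex.exp_add]
    ring_nf
  have h1σ' : 1 - sigmoid y = (1 + rexp y)⁻¹ := by rw [← sigmoid_neg, sigmoid_def, neg_neg]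
  have hσ' : (sigmoid y : ℂ) ≠ 0 := by exact_mod_cast hσ.ne'
  have hexp : (1 + rexp y : ℂ) ≠ 0 := by exact_mod_cast (by positivity : 0 < 1 + rexp y).ne'
  rw [abs_of_pos (mul_pos hσ h1σ), hpow, Complex.real_smul, h1σ']
  simp only [Complex.ofReal_mul, Complex.ofReal_inv, Complex.ofReal_add, Complex.ofReal_one]
  field_simp

lemma integrable_cexp_mul_div_one_add_exp {c : ℂ} (h0 : 0 < c.re) (h1 : c.re < 1) :
    Integrable fun y : ℝ => cexp (c * y) / (1 + rexp y) := by
  have hbeta := Complex.betaIntegral_convergent h0 (by simpa using h1 : 0 < (1 - c).re)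
  rw [intervalIntegrable_iff_integrableOn_Ioc_of_le zero_le_one] at hbeta
  have := hbeta.mono_set Ioo_subset_Ioc_self
  rw [← range_sigmoid, ← image_univ, integrableOn_image_iff_integrableOn_abs_deriv_smul
    MeasurableSet.univ (fun y _ => (hasDerivAt_sigmoid y).hasDerivWithinAt)
    sigmoid_injective.injOn, integrableOn_univ] at this
  simpa only [abs_deriv_sigmoid_smul_cpow_mul_cpow] using this

theorem integral_cexp_mul_div_one_add_exp {c : ℂ} (h0 : 0 < c.re) (h1 : c.re < 1) :
    ∫ y : ℝ, cexp (c * y) / (1 + rexp y) = π / Complex.sin (π * c) := by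
  calc ∫ y : ℝ, cexp (c * y) / (1 + rexp y)
      = ∫ t in Ioo (0 : ℝ) 1, (t : ℂ) ^ (c - 1) * (1 - (t : ℂ)) ^ (1 - c - 1) := by
        rw [← range_sigmoid, ← image_univ, integral_image_eq_integral_abs_deriv_smul
          MeasurableSet.univ (fun y _ => (hasDerivAt_sigmoid y).hasDerivWithinAt)
          sigmoid_injective.injOn, setIntegral_univ]
        simp_rw [abs_deriv_sigmoid_smul_cpow_mul_cpow]
    _ = Complex.betaIntegral c (1 - c) := by
        rw [Complex.betaIntegral, intervalIntegral.integral_of_le zero_le_one,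
          integral_Ioc_eq_integral_Ioo]
    _ = π / Complex.sin (π * c) := by
        rw [Complex.betaIntegral_eq_Gamma_mul_div _ _ h0 (by simpa using h1), add_sub_cancel,
          Complex.Gamma_one, div_one, Complex.Gamma_mul_Gamma_one_sub]

lemma inv_cosh_eq (t : ℝ) : (cosh t)⁻¹ = 2 * rexp t / (1 + rexp (2 * t)) := by
  rw [cosh_eq, exp_neg, show 2 * t = t + t by ring, exp_add]
  field_simp
  ring

lemma cexp_mul_inv_cosh_pi_mul_eq (ξ x : ℝ) :
    cexp (↑(-2 * π * x * ξ) * Complex.I) * ((cosh (π * x))⁻¹ : ℂ)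
      = 2 * (cexp ((1 / 2 - ξ * Complex.I) * ↑(2 * π * x)) / (1 + rexp (2 * π * x))) := by
  rw [← Complex.ofReal_inv, inv_cosh_eq, show 2 * (π * x) = 2 * π * x by ring]
  push_cast
  rw [mul_div_assoc', mul_div_assoc', mul_left_comm, ← Complex.exp_add]
  ring_nf

theorem fourier_inv_cosh_pi_mul :
    𝓕 (fun x : ℝ => ((cosh (π * x))⁻¹ : ℂ)) = fun ξ : ℝ => ((cosh (π * ξ))⁻¹ : ℂ) := by
  ext ξ
  have hc0 : 0 < (1 / 2 - ξ * Complex.I).re := by simp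
  have hc1 : (1 / 2 - ξ * Complex.I).re < 1 := by norm_num
  have hsin : Complex.sin (π * (1 / 2 - ξ * Complex.I)) = cosh (π * ξ) := by
    rw [show (π * (1 / 2 - ξ * Complex.I) : ℂ) = π / 2 - ↑(π * ξ) * Complex.I by push_cast; ring,
      Complex.sin_pi_div_two_sub, Complex.cos_mul_I, Complex.ofReal_cosh]
  rw [fourier_real_eq_integral_exp_smul]
  simp_rw [smul_eq_mul, cexp_mul_inv_cosh_pi_mul_eq]
  rw [integral_const_mul, Measure.integral_comp_mul_left
      (fun y : ℝ => cexp ((1 / 2 - ξ * Complex.I) * y) / (1 + rexp y)),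
    integral_cexp_mul_div_one_add_exp hc0 hc1, hsin, abs_of_pos (by positivity), Complex.real_smul]
  push_cast
  field_simp

lemma integrable_inv_cosh_pi_mul : Integrable fun x : ℝ => ((cosh (π * x))⁻¹ : ℂ) := by
  have h := ((integrable_cexp_mul_div_one_add_exp (c := 1 / 2) (by norm_num) (by norm_num)
    ).comp_mul_left' (mul_ne_zero two_ne_zero pi_ne_zero)).const_mul 2
  refine h.congr (ae_of_all _ fun x => ?_)
  simpa using (cexp_mul_inv_cosh_pi_mul_eq 0 x).symm

theorem Real.fourier_const_smul {V E : Type*} [NormedAddCommGroup V] [InnerProductSpace ℝ V]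
    [MeasurableSpace V] [BorelSpace V] [FiniteDimensional ℝ V] [NormedAddCommGroup E]
    [NormedSpace ℂ E] (r : ℂ) (f : V → E) : 𝓕 (r • f) = r • 𝓕 f :=
  VectorFourier.fourierIntegral_const_smul _ _ _ f r

theorem integral_fourier_mul_eq_integral_mul_fourier {V : Type*} [NormedAddCommGroup V]
    [InnerProductSpace ℝ V] [MeasurableSpace V] [BorelSpace V] [FiniteDimensional ℝ V]
    {f g : V → ℂ} (hf : Integrable f) (hg : Integrable g) :
    ∫ ξ, 𝓕 f ξ * g ξ = ∫ x, f x * 𝓕 g x := by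
  simpa using! VectorFourier.integral_fourierIntegral_smul_eq_flip (L := innerₗ V)
    Real.continuous_fourierChar continuous_inner hf hg

lemma integrable_pow_mul_cexp_neg_mul_sq {b : ℂ} (hb : 0 < b.re) (n : ℕ) :
    Integrable fun x : ℝ => (x : ℂ) ^ n * cexp (-b * x ^ 2) := by
  have hs : (-1 : ℝ) < n := by linarith [n.cast_nonneg (α := ℝ)]
  refine (integrable_rpow_mul_exp_neg_mul_sq hb hs).norm.mono' (by fun_prop)
    (ae_of_all _ fun x => ?_)
  rw [norm_mul, norm_cexp_neg_mul_sq, rpow_natCast, norm_mul, norm_pow, Complex.norm_real,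
    norm_of_nonneg (exp_pos _).le, norm_pow]

lemma hasDerivAt_cexp_mul_sq (c : ℂ) (t : ℝ) :
    HasDerivAt (fun t : ℝ => cexp (c * t ^ 2)) (2 * c * t * cexp (c * t ^ 2)) t := by
  have h : HasDerivAt (fun z : ℂ => cexp (c * z ^ 2)) (2 * c * t * cexp (c * t ^ 2)) t :=
    ((hasDerivAt_pow 2 (t : ℂ)).const_mul c).cexp.congr_deriv (by ring)
  exact h.comp_ofReal

lemma iteratedDeriv_two_const_mul_cexp_mul_sq (a c : ℂ) (t : ℝ) :
    iteratedDeriv 2 (fun t : ℝ => a * cexp (c * t ^ 2)) t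
      = a * (2 * c + (2 * c * t) ^ 2) * cexp (c * t ^ 2) := by
  have hd : deriv (fun t : ℝ => a * cexp (c * t ^ 2))
      = fun t : ℝ => (2 * a * c) * ((t : ℂ) * cexp (c * t ^ 2)) :=
    funext fun t => ((hasDerivAt_cexp_mul_sq c t).const_mul a).deriv.trans (by ring)
  rw [iteratedDeriv_succ, iteratedDeriv_one, hd]
  exact ((((hasDerivAt_id t).ofReal_comp).mul (hasDerivAt_cexp_mul_sq c t)).const_mul
    (2 * a * c)).deriv.trans (by simp only [Complex.ofReal_one, one_mul, id_eq]; ring)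

theorem fourier_sq_mul_cexp_neg_pi_mul_sq {b : ℂ} (hb : 0 < b.re) :
    𝓕 (fun x : ℝ => (x : ℂ) ^ 2 * cexp (-π * b * x ^ 2)) = fun t : ℝ =>
      1 / b ^ (1 / 2 : ℂ) * (1 / (2 * π * b) - t ^ 2 / b ^ 2) * cexp (-π / b * t ^ 2) := by
  have hb' : 0 < (π * b).re := by simpa using mul_pos pi_pos hb
  have hint (n : ℕ) (_ : (n : ℕ∞) ≤ 2) :
      Integrable fun x : ℝ => x ^ n • cexp (-π * b * x ^ 2) := by
    simpa [neg_mul, ← mul_assoc, Complex.real_smul] using integrable_pow_mul_cexp_neg_mul_sq hb' n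
  have h2 := Real.iteratedDeriv_fourier hint le_rfl (n := 2)
  have hsmul : (fun x : ℝ => (-2 * π * Complex.I * x) ^ 2 • cexp (-π * b * x ^ 2))
      = (-4 * π ^ 2 : ℂ) • fun x : ℝ => (x : ℂ) ^ 2 * cexp (-π * b * x ^ 2) := by
    ext x
    simp only [smul_eq_mul, Pi.smul_apply, mul_pow, Complex.I_sq]
    ring
  rw [fourier_gaussian_pi hb, hsmul, Real.fourier_const_smul] at h2
  ext t
  have ht := congrFun h2 t
  rw [iteratedDeriv_two_const_mul_cexp_mul_sq, Pi.smul_apply, smul_eq_mul] at ht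
  have hπ : (π : ℂ) ≠ 0 := Complex.ofReal_ne_zero.2 pi_ne_zero
  have hb0 : b ≠ 0 := fun h => by simp [h] at hb
  field_simp at ht ⊢
  linear_combination (1 / 2 : ℂ) * ht

lemma MeasureTheory.Integrable.div_cosh_mul {f : ℝ → ℝ} (hf : Integrable f) (c : ℝ) :
    Integrable fun x => f x / cosh (c * x) := by
  refine hf.mul_bdd (c := 1) (by fun_prop) (ae_of_all _ fun x => ?_)
  rw [norm_inv, norm_of_nonneg (cosh_pos _).le]
  exact inv_le_one_of_one_le₀ (one_le_cosh _)

lemma integrable_sq_mul_exp_neg_mul_sq {b : ℝ} (hb : 0 < b) :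
    Integrable fun x : ℝ => x ^ 2 * rexp (-b * x ^ 2) := by
  simpa using integrable_rpow_mul_exp_neg_mul_sq hb (s := 2) (by norm_num)

theorem integral_half_sub_sq_mul_exp_neg_sq_div_cosh_pi_mul :
    ∫ x, (1 / 2 - x ^ 2) * rexp (-x ^ 2) / cosh (π * x)
      = π ^ (5 / 2 : ℝ) * ∫ x, x ^ 2 * rexp (-(π * x) ^ 2) / cosh (π * x) := by
  have hπ : (0 : ℝ) < π := pi_pos
  have hsqrt : ((π : ℂ) ^ (1 / 2 : ℂ)) = ((π ^ (1 / 2 : ℝ) : ℝ) : ℂ) := by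
    simpa using (Complex.ofReal_cpow hπ.le (1 / 2)).symm
  have h52 : π ^ (5 / 2 : ℝ) = π ^ (1 / 2 : ℝ) * π ^ 2 := by
    rw [← rpow_natCast, ← rpow_add hπ]; norm_num
  have hfourier (ξ : ℝ) : 1 / (π : ℂ) ^ (1 / 2 : ℂ) * (1 / (2 * π * π) - ξ ^ 2 / π ^ 2)
      * cexp (-π / π * ξ ^ 2) * ((cosh (π * ξ))⁻¹ : ℂ)
      = ((π ^ (5 / 2 : ℝ))⁻¹ * ((1 / 2 - ξ ^ 2) * rexp (-ξ ^ 2) / cosh (π * ξ)) : ℝ) := by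
    have : (π : ℂ) ≠ 0 := Complex.ofReal_ne_zero.2 hπ.ne'
    rw [hsqrt, h52, neg_div, div_self this, neg_one_mul]
    push_cast
    field_simp
  have hgauss (x : ℝ) : (x : ℂ) ^ 2 * cexp (-π * π * x ^ 2) * ((cosh (π * x))⁻¹ : ℂ)
      = (x ^ 2 * rexp (-(π * x) ^ 2) / cosh (π * x) : ℝ) := by
    push_cast
    ring_nf
  have hparseval := integral_fourier_mul_eq_integral_mul_fourier
    (integrable_pow_mul_cexp_neg_mul_sq (b := π * π) (by simp [hπ]) 2)
    integrable_inv_cosh_pi_mul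
  simp only [← neg_mul] at hparseval
  rw [fourier_inv_cosh_pi_mul, fourier_sq_mul_cexp_neg_pi_mul_sq (b := π) (by simpa using hπ)]
    at hparseval
  simp only [hfourier, hgauss, integral_complex_ofReal, Complex.ofReal_inj, integral_const_mul]
    at hparseval
  rw [← hparseval, ← mul_assoc, mul_inv_cancel₀ (by positivity), one_mul]

theorem integral_gaussian_add_mul_sq_div_cosh_pi_mul :
    ∫ x, (rexp (-x ^ 2) + π ^ (5 / 2 : ℝ) * rexp (-(π * x) ^ 2)) * (x ^ 2 / cosh (π * x))
      = 1 / 2 * ∫ x, rexp (-x ^ 2) / cosh (π * x) := by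
  have hA : Integrable fun x => x ^ 2 * rexp (-x ^ 2) / cosh (π * x) := by
    simpa using (integrable_sq_mul_exp_neg_mul_sq one_pos).div_cosh_mul π
  have hB : Integrable fun x => rexp (-x ^ 2) / cosh (π * x) := by
    simpa using (integrable_exp_neg_mul_sq one_pos).div_cosh_mul π
  have hC : Integrable fun x => x ^ 2 * rexp (-(π * x) ^ 2) / cosh (π * x) := by
    simpa only [neg_mul, mul_pow] using
      (integrable_sq_mul_exp_neg_mul_sq (b := π ^ 2) (by positivity)).div_cosh_mul π
  have hD : Integrable fun x => (1 / 2 - x ^ 2) * rexp (-x ^ 2) / cosh (π * x) :=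
    ((hB.const_mul (1 / 2)).sub hA).congr (ae_of_all _ fun x => by simp only [Pi.sub_apply]; ring)
  calc ∫ x, (rexp (-x ^ 2) + π ^ (5 / 2 : ℝ) * rexp (-(π * x) ^ 2)) * (x ^ 2 / cosh (π * x))
      = (∫ x, x ^ 2 * rexp (-x ^ 2) / cosh (π * x))
          + π ^ (5 / 2 : ℝ) * ∫ x, x ^ 2 * rexp (-(π * x) ^ 2) / cosh (π * x) := by
        rw [← integral_const_mul, ← integral_add hA (hC.const_mul _)]
        congr 1 with x
        ring
    _ = (∫ x, x ^ 2 * rexp (-x ^ 2) / cosh (π * x))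
          + ∫ x, (1 / 2 - x ^ 2) * rexp (-x ^ 2) / cosh (π * x) := by
        rw [integral_half_sub_sq_mul_exp_neg_sq_div_cosh_pi_mul]
    _ = 1 / 2 * ∫ x, rexp (-x ^ 2) / cosh (π * x) := by
        rw [← integral_add hA hD, ← integral_const_mul]
        congr 1 with x
        ring

lemma integral_Ioi_eq_half_integral_of_even {f : ℝ → ℝ} (hf : f.Even) :
    ∫ x in Ioi 0, f x = (∫ x, f x) / 2 := by
  have habs : (fun x => f |x|) = f := funext fun x => by
    rcases abs_choice x with h | h <;> rw [h]
    exact hf x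
  rw [← habs, integral_comp_abs, habs]
  ring

theorem integral_Ioi_gaussian_add_mul_sq_div_cosh_pi_mul :
    ∫ x in Ioi 0, (rexp (-x ^ 2) + π ^ (5 / 2 : ℝ) * rexp (-(π * x) ^ 2)) * (x ^ 2 / cosh (π * x))
      = 1 / 2 * ∫ x in Ioi 0, rexp (-x ^ 2) / cosh (π * x) := by
  rw [integral_Ioi_eq_half_integral_of_even, integral_Ioi_eq_half_integral_of_even,
    integral_gaussian_add_mul_sq_div_cosh_pi_mul]
  · ring
  all_goals intro x; simp [mul_neg, cosh_neg]

theorem russell_integral_7 :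
    ∫ x in Set.Ioi (0:ℝ),
      (Real.exp (-x^2 / π^2) + π ^ ((5:ℝ)/2) * Real.exp (-x^2)) * (x^2 / Real.cosh x) =
    (π^2 / 2) * ∫ x in Set.Ioi (0:ℝ), Real.exp (-x^2 / π^2) / Real.cosh x := by
  have hπ : (0 : ℝ) < π := pi_pos
  have hsubst (g : ℝ → ℝ) : ∫ x in Ioi 0, g x = π * ∫ u in Ioi 0, g (π * u) := by
    simpa using (integral_comp_mul_left_Ioi' g 0 hπ).symm
  have hscale (u : ℝ) : -(π * u) ^ 2 / π ^ 2 = -u ^ 2 := by field_simp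
  calc _ = π * ∫ u in Ioi 0, π ^ 2 * ((rexp (-u ^ 2) + π ^ (5 / 2 : ℝ) * rexp (-(π * u) ^ 2))
          * (u ^ 2 / cosh (π * u))) := by
        rw [hsubst]
        congr 1
        refine integral_congr_ae (ae_of_all _ fun u => ?_)
        dsimp only
        rw [hscale]
        ring_nf
    _ = π ^ 3 / 2 * ∫ u in Ioi 0, rexp (-u ^ 2) / cosh (π * u) := by
        rw [integral_const_mul, integral_Ioi_gaussian_add_mul_sq_div_cosh_pi_mul]
        ring
    _ = _ := by
        rw [hsubst fun x => rexp (-x ^ 2 / π ^ 2) / cosh x]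
        simp only [hscale]
        ring
end
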